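/- arXiv:2010.13279 — 6 statements merged into one kernel-verified Lean document; each statement's English description precedes it below -/
import Mathlib

section
/- For the single-well random walk on {−N,…,N} started at 0 with parameter θ ∈ (0,1), θ ≠ 1/2 (on {1,…,N−1} it steps +1 with probability θ and −1 with probability 1−θ; on {−N+1,…,0} it steps −1 with probability θ and +1 with probability 1−θ), the expected hitting time of {−N, N} equals (2θ(1−θ)/(1−2θ)²)·((1−θ)/θ)^N − (1/(1−2θ))·(N + 2θ(1−θ)/(1−2θ)). -/
/-!
Read outward from `0`, each half of the well solves the same second-order affine recurrence
`f (k + 1) = 1 + θ f (k + 2) + (1 - θ) f k` with `f N = 0`. Its increments `f k - f (k + 1)`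
relax geometrically, with ratio `(1 - θ) / θ`, towards the fixed point `1 / (2θ - 1)`, so that
`f 0 - f N` is an increasing affine function of the first increment. Both halves share `f 0`
and `f N`, hence `e 1 = e (-1)`; the equation at `0` then gives `e 0 - e 1 = 1`, and summing
the increments gives the formula.
-/

open Finset

variable {f : ℕ → ℝ} {p c : ℝ} {N : ℕ}

theorem sub_succ_sub_eq_of_recurrence (hp : p ≠ 0) (h2p : 2 * p - 1 ≠ 0)
    (hrec : ∀ k, k + 1 < N → f (k + 1) = c + p * f (k + 2) + (1 - p) * f k) :
    ∀ k < N, f k - f (k + 1) - c / (2 * p - 1) =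
      ((1 - p) / p) ^ k * (f 0 - f 1 - c / (2 * p - 1)) := by
  intro k
  induction k with
  | zero => simp
  | succ k ih =>
    intro hk
    rw [pow_succ, mul_comm _ ((1 - p) / p), mul_assoc, ← ih (by omega)]
    have hstep := hrec k hk
    field_simp
    linear_combination (2 * p - 1) * hstep

theorem sub_eq_of_recurrence (hp : p ≠ 0) (h2p : 2 * p - 1 ≠ 0)
    (hrec : ∀ k, k + 1 < N → f (k + 1) = c + p * f (k + 2) + (1 - p) * f k) :
    f 0 - f N = (f 0 - f 1 - c / (2 * p - 1)) * ∑ k ∈ range N, ((1 - p) / p) ^ k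
      + N * (c / (2 * p - 1)) := by
  have hincr : ∀ k ∈ range N, f k - f (k + 1) =
      ((1 - p) / p) ^ k * (f 0 - f 1 - c / (2 * p - 1)) + c / (2 * p - 1) := fun k hk => by
    rw [← sub_succ_sub_eq_of_recurrence hp h2p hrec k (mem_range.mp hk)]
    ring
  rw [← sum_range_sub' f N, sum_congr rfl hincr, sum_add_distrib, ← sum_mul, sum_const,
    card_range, nsmul_eq_mul]
  ring

theorem affine_geom_sum_eq {θ : ℝ} (hθ : θ ≠ 0) (hθhalf : θ ≠ 1 / 2) (N : ℕ) :
    (1 - 1 / (2 * θ - 1)) * ∑ k ∈ range N, ((1 - θ) / θ) ^ k + N * (1 / (2 * θ - 1)) =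
      (2 * θ * (1 - θ) / (1 - 2 * θ) ^ 2) * ((1 - θ) / θ) ^ N
        - (1 / (1 - 2 * θ)) * ((N : ℝ) + 2 * θ * (1 - θ) / (1 - 2 * θ)) := by
  have hρ : (1 - θ) / θ ≠ 1 := fun h => hθhalf (by field_simp at h; linarith)
  have h12 : 1 - 2 * θ ≠ 0 := fun h => hθhalf (by linarith)
  have h21 : 2 * θ - 1 ≠ 0 := fun h => hθhalf (by linarith)
  have hρ_sub_one : (1 - θ) / θ - 1 = (1 - 2 * θ) / θ := by field_simp; ring
  rw [geom_sum_eq hρ, hρ_sub_one]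
  generalize ((1 - θ) / θ) ^ N = P
  field_simp
  ring

/-- Single-well random walk on `{-N,…,N}` started at `0`, `θ ≠ 1/2`: explicit
expected hitting time of `{-N, N}`, characterized via the hitting-time system. -/
theorem stmt6 (N : ℕ) (hN : 1 ≤ N) (θ : ℝ) (hθ0 : 0 < θ) (hθ1 : θ < 1)
    (hθhalf : θ ≠ 1 / 2) (e : ℤ → ℝ)
    (hbl : e (-(N : ℤ)) = 0) (hbr : e (N : ℤ) = 0)
    (hrec₁ : ∀ x : ℤ, 1 ≤ x → x < (N : ℤ) →
      e x = 1 + θ * e (x + 1) + (1 - θ) * e (x - 1))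
    (hrec₂ : ∀ x : ℤ, -(N : ℤ) < x → x ≤ 0 →
      e x = 1 + (1 - θ) * e (x + 1) + θ * e (x - 1)) :
    e 0 = (2 * θ * (1 - θ) / (1 - 2 * θ) ^ 2) * ((1 - θ) / θ) ^ N
        - (1 / (1 - 2 * θ)) * ((N : ℝ) + 2 * θ * (1 - θ) / (1 - 2 * θ)) := by
  have hθ : θ ≠ 0 := hθ0.ne'
  have h2θ : 2 * θ - 1 ≠ 0 := fun h => hθhalf (by linarith)
  have hright := sub_eq_of_recurrence (f := fun k : ℕ => e k) (c := 1) (N := N) hθ h2θ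
      fun k hk => by
        have := hrec₁ (k + 1) (by omega) (by omega)
        push_cast
        rw [this]
        ring_nf
  have hleft := sub_eq_of_recurrence (f := fun k : ℕ => e (-k)) (c := 1) (N := N) hθ h2θ
      fun k hk => by
        have := hrec₂ (-(k + 1)) (by omega) (by omega)
        push_cast
        rw [this]
        ring_nf
  simp only [Nat.cast_zero, neg_zero, Nat.cast_one, hbl, hbr, sub_zero] at hright hleft
  have hsym : e 1 = e (-1) := by
    have hG := geom_sum_pos (div_pos (sub_pos.mpr hθ1) hθ0).le (Nat.one_le_iff_ne_zero.mp hN)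
    have := mul_right_cancel₀ hG.ne' (add_right_cancel (hright.symm.trans hleft))
    linarith
  have hstep : e 0 - e 1 = 1 := by
    have := hrec₂ 0 (by omega) le_rfl
    simp only [zero_add, zero_sub] at this
    linear_combination this - θ * hsym
  rw [hright, hstep, affine_geom_sum_eq hθ hθhalf]
end

section
/- With m_N and h_N as for the single-well random walk (h_N(θ) = N^{−1} log m_N(θ), h(θ) = max(log((1−θ)/θ), 0)), for any a ∈ (0,1), sup_{θ ∈ [a,1)} |h_N(θ) − h(θ)| → 0 as N → ∞. -/
/-!
With `r = (1 - θ) / θ`, the closed form `m_N(θ)` is the sum `∑_{j<N} (1 + 2 ∑_{i<j} r^{i+1})`, whose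
`j`-th summand is the expected time the walk needs to climb from level `j` to level `j + 1`. Writing `M = max 1 r`, every summand lies between
`1` and `(2j + 1) M^j`, and the last one is at least `M^{N-1}`, so `M^{N-1} ≤ m_N(θ) ≤ N² M^N`.
Hence `|h_N(θ) - log M| ≤ (log M + 2 log N) / N`, and `log M ≤ log a⁻¹` uniformly on `[a, 1)`.
-/

open Filter Topology

/-- Expected hitting time of the single-well walk (including `θ = 1/2`). -/
noncomputable def mSW (N : ℕ) (θ : ℝ) : ℝ :=
  if θ = 1 / 2 then (N : ℝ) ^ 2 else
    (2 * θ * (1 - θ) / (1 - 2 * θ) ^ 2) * ((1 - θ) / θ) ^ N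
      - (1 / (1 - 2 * θ)) * ((N : ℝ) + 2 * θ * (1 - θ) / (1 - 2 * θ))

open Finset Real

noncomputable def crossingTime (j : ℕ) (r : ℝ) : ℝ :=
  1 + 2 * ∑ i ∈ range j, r ^ (i + 1)

noncomputable def hittingSum (N : ℕ) (r : ℝ) : ℝ :=
  ∑ j ∈ range N, crossingTime j r

section hittingSum

variable {r : ℝ}

lemma hittingSum_one (N : ℕ) : hittingSum N 1 = (N : ℝ) ^ 2 := by
  induction N with
  | zero => simp [hittingSum]
  | succ n ih =>
    rw [hittingSum, sum_range_succ, ← hittingSum, ih, crossingTime]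
    simp only [one_pow, sum_const, card_range, nsmul_eq_mul, mul_one]
    push_cast
    ring

lemma hittingSum_of_ne_one (hr : r ≠ 1) (N : ℕ) :
    hittingSum N r = N + 2 * r / (r - 1) * ((r ^ N - 1) / (r - 1) - N) := by
  have hr' : r - 1 ≠ 0 := sub_ne_zero.mpr hr
  induction N with
  | zero => simp [hittingSum]
  | succ n ih =>
    rw [hittingSum, sum_range_succ, ← hittingSum, ih, crossingTime]
    simp only [pow_succ, ← sum_mul, geom_sum_eq hr]
    push_cast
    field_simp
    ring

lemma mSW_eq_hittingSum (N : ℕ) {θ : ℝ} (hθ : θ ≠ 0) :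
    mSW N θ = hittingSum N ((1 - θ) / θ) := by
  by_cases h : θ = 1 / 2
  · subst h
    norm_num [mSW, hittingSum_one]
  · have hs : 1 - 2 * θ ≠ 0 := fun hc => h (by linarith)
    have hr : (1 - θ) / θ ≠ 1 := fun hc => h (by rw [div_eq_one_iff_eq hθ] at hc; linarith)
    have hr1 : (1 - θ) / θ - 1 = (1 - 2 * θ) / θ := by field_simp; ring
    rw [hittingSum_of_ne_one hr, mSW, if_neg h, div_pow, hr1]
    field_simp
    ring

lemma max_one_pow_le_crossingTime (hr : 0 ≤ r) (j : ℕ) : max 1 r ^ j ≤ crossingTime j r := by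
  have hsum : 0 ≤ ∑ i ∈ range j, r ^ (i + 1) := sum_nonneg fun i _ => by positivity
  rcases le_total r 1 with h | h
  · rw [max_eq_left h, one_pow, crossingTime]
    linarith
  · rw [max_eq_right h, crossingTime]
    cases j with
    | zero => simp
    | succ k =>
      have hk : r ^ (k + 1) ≤ ∑ i ∈ range (k + 1), r ^ (i + 1) :=
        single_le_sum (f := fun i => r ^ (i + 1)) (fun i _ => by positivity) (self_mem_range_succ k)
      linarith

lemma crossingTime_le (hr : 0 ≤ r) (j : ℕ) : crossingTime j r ≤ (2 * j + 1) * max 1 r ^ j := by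
  have hM : 1 ≤ max 1 r := le_max_left _ _
  have hterm : ∀ i ∈ range j, r ^ (i + 1) ≤ max 1 r ^ j := fun i hi =>
    calc r ^ (i + 1) ≤ max 1 r ^ (i + 1) := pow_le_pow_left₀ hr (le_max_right _ _) _
      _ ≤ max 1 r ^ j := pow_le_pow_right₀ hM (mem_range.mp hi)
  have hsum : ∑ i ∈ range j, r ^ (i + 1) ≤ j * max 1 r ^ j := by
    simpa using sum_le_sum hterm
  have hone : 1 ≤ max 1 r ^ j := one_le_pow₀ hM
  rw [crossingTime]
  linarith

lemma sum_range_two_mul_add_one (N : ℕ) : ∑ j ∈ range N, (2 * (j : ℝ) + 1) = (N : ℝ) ^ 2 := by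
  induction N with
  | zero => simp
  | succ n ih => rw [sum_range_succ, ih]; push_cast; ring

lemma max_one_pow_pred_le_hittingSum (hr : 0 ≤ r) {N : ℕ} (hN : 0 < N) :
    max 1 r ^ (N - 1) ≤ hittingSum N r :=
  (max_one_pow_le_crossingTime hr _).trans <|
    single_le_sum (fun j _ => (zero_le_one.trans (one_le_pow₀ (le_max_left 1 r))).trans
      (max_one_pow_le_crossingTime hr j)) (mem_range.mpr (Nat.sub_lt hN one_pos))

lemma hittingSum_le (hr : 0 ≤ r) (N : ℕ) : hittingSum N r ≤ (N : ℝ) ^ 2 * max 1 r ^ N := by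
  have hM : 1 ≤ max 1 r := le_max_left _ _
  calc hittingSum N r ≤ ∑ j ∈ range N, (2 * (j : ℝ) + 1) * max 1 r ^ N :=
        sum_le_sum fun j hj => (crossingTime_le hr j).trans <|
          mul_le_mul_of_nonneg_left (pow_le_pow_right₀ hM (mem_range.mp hj).le) (by positivity)
    _ = (N : ℝ) ^ 2 * max 1 r ^ N := by rw [← sum_mul, sum_range_two_mul_add_one]

end hittingSum

lemma abs_inv_mul_log_sub_log_le {P M : ℝ} {N : ℕ} (hN : 0 < N) (hM : 1 ≤ M)
    (hlow : M ^ (N - 1) ≤ P) (hup : P ≤ (N : ℝ) ^ 2 * M ^ N) :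
    |(N : ℝ)⁻¹ * log P - log M| ≤ (log M + 2 * log N) / N := by
  have hNpos : (0 : ℝ) < N := by exact_mod_cast hN
  have hMpos : 0 < M := one_pos.trans_le hM
  have hPpos : 0 < P := (pow_pos hMpos _).trans_le hlow
  have hlogM : 0 ≤ log M := log_nonneg hM
  have hlogN : 0 ≤ log N := log_nonneg (by exact_mod_cast hN)
  have hlow' : ((N : ℝ) - 1) * log M ≤ log P := by
    have := log_le_log (pow_pos hMpos _) hlow
    rwa [log_pow, Nat.cast_pred hN] at this
  have hup' : log P ≤ N * log M + 2 * log N := by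
    have := log_le_log hPpos hup
    rwa [log_mul (by positivity) (by positivity), log_pow, log_pow, Nat.cast_ofNat,
      add_comm] at this
  have hdiff : |log P - N * log M| ≤ log M + 2 * log N := abs_le.mpr ⟨by linarith, by linarith⟩
  calc |(N : ℝ)⁻¹ * log P - log M| = |log P - N * log M| / N := by
        rw [← abs_of_pos hNpos, ← abs_div, abs_of_pos hNpos]
        congr 1
        field_simp
    _ ≤ (log M + 2 * log N) / N := div_le_div_of_nonneg_right hdiff hNpos.le

lemma abs_inv_mul_log_mSW_sub_le {a θ : ℝ} (ha : 0 < a) (haθ : a ≤ θ) (hθ : θ ≤ 1)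
    {N : ℕ} (hN : 0 < N) :
    |(N : ℝ)⁻¹ * log (mSW N θ) - max (log ((1 - θ) / θ)) 0| ≤ (log a⁻¹ + 2 * log N) / N := by
  have hθ0 : 0 < θ := ha.trans_le haθ
  set r := (1 - θ) / θ
  have hr : 0 ≤ r := div_nonneg (by linarith) hθ0.le
  have hra : max 1 r ≤ a⁻¹ := max_le (one_le_inv₀ ha |>.mpr (haθ.trans hθ)) <|
    calc r ≤ 1 / θ := div_le_div_of_nonneg_right (by linarith) hθ0.le
      _ ≤ a⁻¹ := by rw [one_div]; exact inv_anti₀ ha haθ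
  have hmax : max (log r) 0 = log (max 1 r) := by
    rw [max_comm]
    exact posLog_eq_log_max_one hr
  rw [mSW_eq_hittingSum N hθ0.ne', hmax]
  refine (abs_inv_mul_log_sub_log_le hN (le_max_left _ _)
    (max_one_pow_pred_le_hittingSum hr hN) (hittingSum_le hr N)).trans ?_
  gcongr

lemma tendsto_const_add_two_mul_log_div_atTop (c : ℝ) :
    Tendsto (fun N : ℕ => (c + 2 * log N) / N) atTop (𝓝 0) := by
  have hlog : Tendsto (fun N : ℕ => log N / N) atTop (𝓝 0) :=
    isLittleO_log_id_atTop.tendsto_div_nhds_zero.comp tendsto_natCast_atTop_atTop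
  have := (tendsto_const_div_atTop_nhds_zero_nat c).add (hlog.const_mul 2)
  rw [mul_zero, add_zero] at this
  refine this.congr fun N => ?_
  ring

/-- Uniform convergence on `[a, 1)` of `h_N(θ) = N⁻¹ log m_N(θ)` to
`h(θ) = max (log((1-θ)/θ)) 0` for the single-well walk. -/
theorem stmt8 (a : ℝ) (ha0 : 0 < a) (ha1 : a < 1) :
    Tendsto (fun N : ℕ =>
        ⨆ θ : Set.Ico a (1 : ℝ),
          |(N : ℝ)⁻¹ * Real.log (mSW N θ) - max (Real.log ((1 - (θ : ℝ)) / θ)) 0|)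
      atTop (𝓝 0) := by
  refine squeeze_zero' (Eventually.of_forall fun N => iSup_nonneg fun _ => abs_nonneg _) ?_
    (tendsto_const_add_two_mul_log_div_atTop (log a⁻¹))
  filter_upwards [eventually_gt_atTop 0] with N hN
  have hloga : 0 ≤ log a⁻¹ := log_nonneg ((one_le_inv₀ ha0).mpr ha1.le)
  exact Real.iSup_le (fun θ => abs_inv_mul_log_mSW_sub_le ha0 θ.2.1 θ.2.2.le hN) (by positivity)
end

section
/- For the alternating-wells random walk on {−2N,…,2N} started at 0 with parameter θ ∈ (0,1), θ ≠ 1/2, the expected hitting time of {−2N, 2N} equals [2θ(1−θ)/(1−2θ)²] / [θ(θ/(1−θ))^N + 1−θ] · (1 − (θ/(1−θ))^N) · ((((1−θ)/θ)^N − (θ/(1−θ))^N)). -/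
/-!
Writing `Δ x = e (x + 1) - e x`, the hitting-time equation `e x = 1 + p e (x + 1) + q e (x - 1)`
becomes the first-order recurrence `p Δ x = q Δ (x - 1) - 1`, so inside a well of constant drift
`Δ` is its fixed point `1 / (q - p)` plus a geometric term of ratio `q / p`, and `e` is a
geometric sum. With `r = θ / (1 - θ)` the outer wells have ratio `1 / r` and the middle one ratio
`r`. The three unknown initial increments are tied together by the middle recurrence at `-N` and
`N` and by `e (2N) - e (-2N) = 0`; solving this linear system and summing the geometric series
gives `e 0`.
-/

open Finset

section DriftSegment

variable {p q c ρ : ℝ} {e : ℤ → ℝ}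

lemma increment_recurrence (hpq : p + q = 1) {x : ℤ}
    (hx : e x = 1 + p * e (x + 1) + q * e (x - 1)) :
    p * (e (x + 1) - e x) = q * (e x - e (x - 1)) - 1 := by
  linear_combination -hx - e x * hpq

lemma increment_eq_of_drift (hp : p ≠ 0) (hpq : p + q = 1) (hc : (q - p) * c = 1)
    (hρ : p * ρ = q) {a : ℤ} {m : ℕ}
    (hrec : ∀ x, a < x → x < a + m → e x = 1 + p * e (x + 1) + q * e (x - 1)) :
    ∀ k < m, e (a + k + 1) - e (a + k) = c + (e (a + 1) - e a - c) * ρ ^ k := by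
  intro k
  induction k with
  | zero => intro _; simp
  | succ k ih =>
    intro hk
    have hstep := increment_recurrence hpq (hrec (a + k + 1) (by omega) (by omega))
    rw [add_sub_cancel_right, ih (by omega)] at hstep
    apply mul_left_cancel₀ hp
    push_cast
    rw [← add_assoc, hstep]
    linear_combination hc - (e (a + 1) - e a - c) * ρ ^ k * hρ

lemma sub_eq_of_drift (hp : p ≠ 0) (hpq : p + q = 1) (hc : (q - p) * c = 1)
    (hρ : p * ρ = q) {a : ℤ} {m : ℕ}
    (hrec : ∀ x, a < x → x < a + m → e x = 1 + p * e (x + 1) + q * e (x - 1)) :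
    ∀ j ≤ m, e (a + j) - e a = j * c + (e (a + 1) - e a - c) * ∑ k ∈ range j, ρ ^ k := by
  intro j hj
  have htel := sum_range_sub (fun k : ℕ => e (a + k)) j
  simp only [Nat.cast_add, Nat.cast_one, Nat.cast_zero, add_zero, ← add_assoc] at htel
  rw [← htel, sum_congr rfl fun k hk =>
    increment_eq_of_drift hp hpq hc hρ hrec k (by have := mem_range.mp hk; omega),
    sum_add_distrib, sum_const, card_range, nsmul_eq_mul, mul_sum]

end DriftSegment

lemma geom_sum_odds_eq {θ : ℝ} (hθ1 : θ ≠ 1) (hθhalf : θ ≠ 1 / 2) (n : ℕ) :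
    ∑ k ∈ range n, (θ / (1 - θ)) ^ k = (1 - θ) * (1 - (θ / (1 - θ)) ^ n) / (1 - 2 * θ) := by
  have h1 : 1 - θ ≠ 0 := sub_ne_zero.mpr hθ1.symm
  have h2 : 1 - 2 * θ ≠ 0 := fun h => hθhalf (by linarith)
  have hr1 : θ / (1 - θ) - 1 = -(1 - 2 * θ) / (1 - θ) := by field_simp; ring
  rw [geom_sum_eq (sub_ne_zero.mp (hr1 ▸ div_ne_zero (neg_ne_zero.mpr h2) h1)), hr1]
  field_simp
  ring

lemma geom_sum_inv_odds_eq {θ : ℝ} (hθ0 : θ ≠ 0) (hθhalf : θ ≠ 1 / 2) (n : ℕ) :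
    ∑ k ∈ range n, ((1 - θ) / θ) ^ k = θ * (((θ / (1 - θ)) ^ n)⁻¹ - 1) / (1 - 2 * θ) := by
  have h := geom_sum_odds_eq (θ := 1 - θ) (by contrapose! hθ0; linarith)
    (by contrapose! hθhalf; linarith) n
  rw [sub_sub_cancel] at h
  rw [h, ← inv_pow, inv_div, ← neg_div_neg_eq]
  ring

lemma odds_pow_ne_one {θ : ℝ} (hθ0 : 0 ≤ θ) (hθ1 : θ < 1) (hθhalf : θ ≠ 1 / 2) {n : ℕ}
    (hn : n ≠ 0) : (θ / (1 - θ)) ^ n ≠ 1 := by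
  rw [Ne, pow_eq_one_iff_of_nonneg (div_nonneg hθ0 (by linarith)) hn,
    div_eq_one_iff_eq (by linarith)]
  contrapose! hθhalf
  linarith

/-- `t`, `A`, `B` are the offsets of the first increments of the left, middle and right well
from their fixed points `c`, `-c`, `c`; `Gs`, `Gr`, `Gr2` are the geometric sums over the wells
(ratio `1 / r` and length `n`, ratio `r` and lengths `n`, `2n`), `σ = (1 / r) ^ (n - 1)`,
`R = r ^ (2n)`, and `m` is the hitting time from `0`. -/
lemma alternating_wells_linear_solve {θ c σ R Gs Gr Gr2 t A B m n : ℝ}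
    (hc : c * (1 - 2 * θ) = 1)
    (hlink : (1 - θ) * (A - c) = θ * (c + t * σ) - 1)
    (hB : B + c = -c + A * R)
    (hbal : (n * c + t * Gs) + (2 * n * -c + A * Gr2) + (n * c + B * Gs) = 0)
    (hm : m = (n * c + t * Gs) + (n * -c + A * Gr))
    (hD : (1 - θ) * Gs + θ * σ * (Gr2 + R * Gs) ≠ 0) :
    m = 2 * c * Gs + (Gr - Gr2 - R * Gs) * (2 * θ * c * Gs * (1 + σ))
      / ((1 - θ) * Gs + θ * σ * (Gr2 + R * Gs)) := by
  rw [← sub_eq_iff_eq_add', eq_div_iff hD]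
  linear_combination ((1 - θ) * Gs + θ * σ * (Gr2 + R * Gs)) * (hm + hbal - Gs * hB)
    + (Gr - Gr2 - R * Gs) * (Gs * hlink + θ * σ * hbal - θ * σ * Gs * hB + Gs * hc)

lemma alternating_wells_value_eq {θ r s c t A B m : ℝ} {N : ℕ} (hN : 1 ≤ N) (hθ0 : 0 < θ)
    (hθ1 : θ < 1) (hθhalf : θ ≠ 1 / 2)
    (hr : r = θ / (1 - θ)) (hs : s = (1 - θ) / θ) (hc : c = 1 / (1 - 2 * θ))
    (hlink : (1 - θ) * (A - c) = θ * (c + t * s ^ (N - 1)) - 1)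
    (hB : B + c = -c + A * r ^ (2 * N))
    (hbal : (N * c + t * ∑ k ∈ range N, s ^ k) + (2 * N * -c + A * ∑ k ∈ range (2 * N), r ^ k)
      + (N * c + B * ∑ k ∈ range N, s ^ k) = 0)
    (hm : m = (N * c + t * ∑ k ∈ range N, s ^ k) + (N * -c + A * ∑ k ∈ range N, r ^ k)) :
    m = 2 * θ * (1 - θ) / (1 - 2 * θ) ^ 2 / (θ * r ^ N + (1 - θ))
        * (1 - r ^ N) * (s ^ N - r ^ N) := by
  have hθ' : 0 < 1 - θ := by linarith
  have hr0 : 0 < r := hr ▸ div_pos hθ0 hθ'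
  have hs0 : 0 < s := hs ▸ div_pos hθ' hθ0
  have hD : 0 < (1 - θ) * ∑ k ∈ range N, s ^ k
      + θ * s ^ (N - 1) * (∑ k ∈ range (2 * N), r ^ k + r ^ (2 * N) * ∑ k ∈ range N, s ^ k) := by
    have hN0 : (range N).Nonempty := nonempty_range_iff.mpr (by omega)
    have : 0 < ∑ k ∈ range N, s ^ k := sum_pos (fun k _ => pow_pos hs0 k) hN0
    have : 0 < ∑ k ∈ range (2 * N), r ^ k :=
      sum_pos (fun k _ => pow_pos hr0 k) (hN0.mono (range_mono (by omega)))
    positivity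
  have h2θ : 1 - 2 * θ ≠ 0 := fun h => hθhalf (by linarith)
  have hc2θ : c * (1 - 2 * θ) = 1 := hc ▸ one_div_mul_cancel h2θ
  rw [alternating_wells_linear_solve hc2θ hlink hB hbal hm hD.ne']
  have hsN : s ^ N = (r ^ N)⁻¹ := by rw [hs, hr, ← inv_pow, inv_div]
  have hsN1 : s ^ (N - 1) = (r ^ N)⁻¹ * r := by
    rw [← hsN, ← pow_sub_one_mul (by omega : N ≠ 0) s, mul_assoc, hs, hr,
      div_mul_div_cancel₀ hθ0.ne', div_self hθ'.ne', mul_one]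
  have hGs : ∑ k ∈ range N, s ^ k = θ * ((r ^ N)⁻¹ - 1) / (1 - 2 * θ) := by
    rw [hs, hr]; exact geom_sum_inv_odds_eq hθ0.ne' hθhalf N
  have hGr (n : ℕ) : ∑ k ∈ range n, r ^ k = (1 - θ) * (1 - r ^ n) / (1 - 2 * θ) :=
    hr ▸ geom_sum_odds_eq hθ1.ne (by contrapose! hθhalf; linarith) n
  have hR : r ^ (2 * N) = (r ^ N) ^ 2 := by rw [← pow_mul, mul_comm]
  have hP : 0 < r ^ N := pow_pos hr0 N
  have hP1 : r ^ N ≠ 1 := hr ▸ odds_pow_ne_one hθ0.le hθ1 hθhalf (by omega)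
  simp only [hGs, hGr, hsN1, hR, hc, hsN]
  rw [hr] at hP hP1 ⊢
  generalize (θ / (1 - θ)) ^ N = P at hP hP1 ⊢
  -- `P (1 - 2θ) (1 - θ) / θ` times the denominator `D` of the previous step
  have hDc : (1 - P) * (1 - θ) ^ 2 + θ * ((1 - θ) * (1 - P ^ 2) + θ * P * (1 - P)) ≠ 0 := by
    rw [show (1 - P) * (1 - θ) ^ 2 + θ * ((1 - θ) * (1 - P ^ 2) + θ * P * (1 - P))
      = (1 - P) * (θ * P + (1 - θ)) by ring]
    exact mul_ne_zero (sub_ne_zero.mpr hP1.symm) (by positivity)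
  field_simp
  ring

/-- Alternating-wells random walk on `{-2N,…,2N}` started at `0`, `θ ≠ 1/2`:
explicit expected hitting time of `{-2N, 2N}`, characterized via the
hitting-time system. -/
theorem stmt11 (N : ℕ) (hN : 1 ≤ N) (θ : ℝ) (hθ0 : 0 < θ) (hθ1 : θ < 1)
    (hθhalf : θ ≠ 1 / 2) (e : ℤ → ℝ)
    (hbl : e (-(2 * N : ℤ)) = 0) (hbr : e ((2 * N : ℤ)) = 0)
    (hrec₁ : ∀ x : ℤ, (-(2 * N : ℤ) < x ∧ x < -(N : ℤ)) ∨ ((N : ℤ) < x ∧ x < (2 * N : ℤ)) →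
      e x = 1 + θ * e (x + 1) + (1 - θ) * e (x - 1))
    (hrec₂ : ∀ x : ℤ, -(N : ℤ) ≤ x → x ≤ (N : ℤ) →
      e x = 1 + (1 - θ) * e (x + 1) + θ * e (x - 1)) :
    e 0 = (2 * θ * (1 - θ) / (1 - 2 * θ) ^ 2) / (θ * (θ / (1 - θ)) ^ N + (1 - θ))
        * (1 - (θ / (1 - θ)) ^ N) * (((1 - θ) / θ) ^ N - (θ / (1 - θ)) ^ N) := by
  have hθ' : 1 - θ ≠ 0 := by linarith
  have hc2θ := mul_one_div_cancel (a := 1 - 2 * θ) fun h => hθhalf (by linarith)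
  set c := 1 / (1 - 2 * θ)
  have hc_out : ((1 - θ) - θ) * c = 1 := by linear_combination hc2θ
  have hc_in : (θ - (1 - θ)) * -c = 1 := by linear_combination hc2θ
  have hrec_left (x : ℤ) (h1 : -(2 * N : ℤ) < x) (h2 : x < -(2 * N : ℤ) + (N : ℕ)) :=
    hrec₁ x (Or.inl ⟨h1, by omega⟩)
  have hrec_mid (x : ℤ) (h1 : -(N : ℤ) < x) (h2 : x < -(N : ℤ) + (2 * N + 1 : ℕ)) :=
    hrec₂ x h1.le (by omega)
  have hrec_right (x : ℤ) (h1 : (N : ℤ) < x) (h2 : x < (N : ℤ) + (N : ℕ)) :=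
    hrec₁ x (Or.inr ⟨h1, by omega⟩)
  have hs := mul_div_cancel₀ (1 - θ) hθ0.ne'
  have hr := mul_div_cancel₀ θ hθ'
  have hL := sub_eq_of_drift hθ0.ne' (by ring) hc_out hs hrec_left N le_rfl
  have hLinc := increment_eq_of_drift hθ0.ne' (by ring) hc_out hs hrec_left (N - 1) (by omega)
  have hM0 := sub_eq_of_drift hθ' (by ring) hc_in hr hrec_mid N (by omega)
  have hMN := sub_eq_of_drift hθ' (by ring) hc_in hr hrec_mid (2 * N) (by omega)
  have hMinc := increment_eq_of_drift hθ' (by ring) hc_in hr hrec_mid (2 * N) (by omega)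
  have hR := sub_eq_of_drift hθ0.ne' (by ring) hc_out hs hrec_right N le_rfl
  rw [show -(2 * N : ℤ) + (N : ℕ) = -N by ring] at hL
  rw [show -(2 * N : ℤ) + ((N - 1 : ℕ) : ℤ) = -N - 1 by omega, sub_add_cancel] at hLinc
  rw [show -(N : ℤ) + (N : ℕ) = 0 by ring] at hM0
  rw [show -(N : ℤ) + ((2 * N : ℕ) : ℤ) = N by push_cast; ring] at hMN hMinc
  rw [show (N : ℤ) + (N : ℕ) = 2 * N by ring] at hR
  push_cast at hMN
  refine alternating_wells_value_eq (t := e (-(2 * N) + 1) - e (-(2 * N)) - c)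
    (A := e (-N + 1) - e (-N) - -c) (B := e (N + 1) - e N - c) hN hθ0 hθ1 hθhalf rfl rfl rfl
    ?_ ?_ ?_ ?_
  · linear_combination increment_recurrence (by ring) (hrec₂ (-N) le_rfl (by omega)) + θ * hLinc
  · linear_combination hMinc
  · linear_combination hbr - hbl - hL - hMN - hR
  · linear_combination hL + hM0 + hbl
end

section
/- Let (Ξ,d) be a compact metric space, μ a probability measure, and m_N : Ξ → (0,∞) integrable. Suppose there exists θ* ∈ supp(μ) such that for every open neighborhood V of θ*, (∫_{V^c} m_N dμ)/(∫_V m_N dμ) → 0 as N → ∞. Then for every continuous f : Ξ → ℝ, (∫ f·m_N dμ)/(∫ m_N dμ) → f(θ*). -/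
/-!
Fix `ε > 0` and let `V = {θ | |f θ - f θ*| < ε / 2}`, an open neighbourhood of `θ*`. Writing
`A = ∫_V m_N` and `B = ∫_{Vᶜ} m_N`, the centred average satisfies
`|∫ f m_N / ∫ m_N - f θ*| ≤ (ε/2 · A + M · B) / (A + B) ≤ ε/2 + M · B / A`,
where `M` bounds `|f - f θ*|` on the compact space, and `B / A → 0` by hypothesis.
-/

open MeasureTheory Filter Topology

section

variable {X : Type*} [MeasurableSpace X] {μ : Measure X} {w g : X → ℝ} {V : Set X}

theorem setIntegral_pos_of_forall_pos (hw : ∀ x, 0 < w x) (hwi : IntegrableOn w V μ)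
    (hV : 0 < μ V) : 0 < ∫ x in V, w x ∂μ := by
  rw [setIntegral_pos_iff_support_of_nonneg_ae (ae_of_all _ fun x => (hw x).le) hwi,
    Function.support_eq_univ fun x => (hw x).ne', Set.univ_inter]
  exact hV

theorem abs_integral_mul_le_of_abs_le_on {δ M : ℝ} (hw : ∀ x, 0 ≤ w x) (hwi : Integrable w μ)
    (hg : AEStronglyMeasurable g μ) (hV : MeasurableSet V) (hM : ∀ x, |g x| ≤ M)
    (hδ : ∀ x ∈ V, |g x| ≤ δ) :
    |∫ x, g x * w x ∂μ| ≤ δ * (∫ x in V, w x ∂μ) + M * ∫ x in Vᶜ, w x ∂μ := by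
  have hgw : Integrable (fun x => g x * w x) μ :=
    hwi.bdd_mul hg (ae_of_all _ fun x => (Real.norm_eq_abs _).trans_le (hM x))
  have habs_eq : ∀ x, |g x * w x| = |g x| * w x := fun x => by rw [abs_mul, abs_of_nonneg (hw x)]
  have habs : Integrable (fun x => |g x| * w x) μ := by
    simpa only [habs_eq] using hgw.abs
  calc |∫ x, g x * w x ∂μ| ≤ ∫ x, |g x| * w x ∂μ := by
        simpa only [Real.norm_eq_abs, habs_eq] using
          norm_integral_le_integral_norm (μ := μ) fun x => g x * w x
    _ = (∫ x in V, |g x| * w x ∂μ) + ∫ x in Vᶜ, |g x| * w x ∂μ :=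
        (integral_add_compl hV habs).symm
    _ ≤ (∫ x in V, δ * w x ∂μ) + ∫ x in Vᶜ, M * w x ∂μ := by
        refine add_le_add ?_ ?_
        · exact setIntegral_mono_on habs.integrableOn (hwi.const_mul δ).integrableOn hV
            fun x hx => mul_le_mul_of_nonneg_right (hδ x hx) (hw x)
        · exact setIntegral_mono_on habs.integrableOn (hwi.const_mul M).integrableOn hV.compl
            fun x _ => mul_le_mul_of_nonneg_right (hM x) (hw x)
    _ = δ * (∫ x in V, w x ∂μ) + M * ∫ x in Vᶜ, w x ∂μ := by
        rw [integral_const_mul, integral_const_mul]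

theorem abs_integral_mul_div_integral_sub_le {f : X → ℝ} {c δ M : ℝ} (hw : ∀ x, 0 ≤ w x)
    (hwi : Integrable w μ) (hf : AEStronglyMeasurable f μ) (hV : MeasurableSet V)
    (hVpos : 0 < ∫ x in V, w x ∂μ) (hM : ∀ x, |f x - c| ≤ M) (hδ : ∀ x ∈ V, |f x - c| ≤ δ) :
    |(∫ x, f x * w x ∂μ) / (∫ x, w x ∂μ) - c|
      ≤ δ + M * ((∫ x in Vᶜ, w x ∂μ) / ∫ x in V, w x ∂μ) := by
  set A := ∫ x in V, w x ∂μ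
  set B := ∫ x in Vᶜ, w x ∂μ
  have hB : 0 ≤ B := setIntegral_nonneg hV.compl fun x _ => hw x
  obtain ⟨x₀, hx₀⟩ : V.Nonempty := by
    refine Set.nonempty_iff_ne_empty.2 fun hV₀ => hVpos.ne' ?_
    simp [A, hV₀]
  have hδ0 : 0 ≤ δ := (abs_nonneg _).trans (hδ x₀ hx₀)
  have hM0 : 0 ≤ M := (abs_nonneg _).trans (hM x₀)
  have hfw : Integrable (fun x => f x * w x) μ := by
    have hfw_centered : Integrable (fun x => (f x - c) * w x) μ :=
      hwi.bdd_mul (hf.sub aestronglyMeasurable_const)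
        (ae_of_all _ fun x => (Real.norm_eq_abs _).trans_le (hM x))
    exact (hfw_centered.add (hwi.const_mul c)).congr
      (ae_of_all _ fun x => by simp only [Pi.add_apply]; ring)
  have htotal : ∫ x, w x ∂μ = A + B := (integral_add_compl hV hwi).symm
  have hcentered : (∫ x, f x * w x ∂μ) / (∫ x, w x ∂μ) - c
      = (∫ x, (f x - c) * w x ∂μ) / (A + B) := by
    simp_rw [sub_mul]
    rw [integral_sub hfw (hwi.const_mul c), integral_const_mul, htotal]
    field_simp
  have hnum := abs_integral_mul_le_of_abs_le_on (g := fun x => f x - c) hw hwi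
    (hf.sub aestronglyMeasurable_const) hV hM hδ
  have hAB : 0 < A + B := add_pos_of_pos_of_nonneg hVpos hB
  rw [hcentered, abs_div, abs_of_pos hAB, div_le_iff₀ hAB]
  calc _ ≤ δ * A + M * B := hnum
    _ ≤ (δ + M * (B / A)) * (A + B) := by
        have hB_le : B ≤ B / A * (A + B) := by
          rw [div_mul_eq_mul_div, le_div_iff₀ hVpos]
          nlinarith
        nlinarith [mul_le_mul_of_nonneg_left hB_le hM0, mul_nonneg hδ0 hB]

end

theorem stmt13_general
    {Ξ : Type*} [MetricSpace Ξ] [CompactSpace Ξ] [MeasurableSpace Ξ] [BorelSpace Ξ]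
    (μ : Measure Ξ)
    (m : ℕ → Ξ → ℝ) (hpos : ∀ N θ, 0 < m N θ)
    (hint : ∀ N, Integrable (m N) μ)
    (θstar : Ξ)
    (hsupp : ∀ V : Set Ξ, IsOpen V → θstar ∈ V → 0 < μ V)
    (hconc : ∀ V : Set Ξ, IsOpen V → θstar ∈ V →
      Tendsto (fun N => (∫ θ in Vᶜ, m N θ ∂μ) / (∫ θ in V, m N θ ∂μ)) atTop (𝓝 0))
    (f : Ξ → ℝ) (hf : Continuous f) :
    Tendsto (fun N => (∫ θ, f θ * m N θ ∂μ) / (∫ θ, m N θ ∂μ)) atTop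
      (𝓝 (f θstar)) := by
  have hdev : Continuous fun θ => |f θ - f θstar| := (hf.sub continuous_const).abs
  obtain ⟨M, hM⟩ : ∃ M, ∀ θ, |f θ - f θstar| ≤ M := by
    obtain ⟨M, hM⟩ := isCompact_univ.exists_bound_of_continuousOn hdev.continuousOn
    exact ⟨M, fun θ => (le_abs_self _).trans (hM θ (Set.mem_univ θ))⟩
  rw [Metric.tendsto_nhds]
  intro ε hε
  set V := {θ | |f θ - f θstar| < ε / 2}
  have hVopen : IsOpen V := isOpen_lt hdev continuous_const
  have hθV : θstar ∈ V := by simpa [V] using half_pos hε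
  have htail : ∀ᶠ N in atTop,
      M * ((∫ θ in Vᶜ, m N θ ∂μ) / ∫ θ in V, m N θ ∂μ) < ε / 2 := by
    have := (hconc V hVopen hθV).const_mul M
    rw [mul_zero] at this
    exact this.eventually (gt_mem_nhds (half_pos hε))
  filter_upwards [htail] with N hN
  rw [Real.dist_eq]
  calc _ ≤ ε / 2 + M * ((∫ θ in Vᶜ, m N θ ∂μ) / ∫ θ in V, m N θ ∂μ) :=
        abs_integral_mul_div_integral_sub_le (fun θ => (hpos N θ).le) (hint N)
          hf.aestronglyMeasurable hVopen.measurableSet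
          (setIntegral_pos_of_forall_pos (hpos N) (hint N).integrableOn (hsupp V hVopen hθV))
          hM fun θ hθ => le_of_lt hθ
    _ < ε := by linarith

/-- Key Lemma (K = 1 case): if the mass of `m_N dμ` outside any neighborhood of
`θ* ∈ supp μ` is asymptotically negligible compared to the mass inside, then the
renormalized measures concentrate at `θ*`. -/
theorem stmt13
    {Ξ : Type*} [MetricSpace Ξ] [CompactSpace Ξ] [MeasurableSpace Ξ] [BorelSpace Ξ]
    (μ : Measure Ξ) [IsProbabilityMeasure μ]
    (m : ℕ → Ξ → ℝ) (hpos : ∀ N θ, 0 < m N θ)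
    (hint : ∀ N, Integrable (m N) μ)
    (θstar : Ξ)
    (hsupp : ∀ V : Set Ξ, IsOpen V → θstar ∈ V → 0 < μ V)
    (hconc : ∀ V : Set Ξ, IsOpen V → θstar ∈ V →
      Tendsto (fun N => (∫ θ in Vᶜ, m N θ ∂μ) / (∫ θ in V, m N θ ∂μ)) atTop (𝓝 0))
    (f : Ξ → ℝ) (hf : Continuous f) :
    Tendsto (fun N => (∫ θ, f θ * m N θ ∂μ) / (∫ θ, m N θ ∂μ)) atTop
      (𝓝 (f θstar)) :=
  stmt13_general μ m hpos hint θstar hsupp hconc f hf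
end

section
/- Let Ξ be a compact metric space, μ a probability measure, m_N : Ξ → (0,∞), and suppose h_N(θ) = N^{−1} log m_N(θ) converges uniformly on Ξ to a continuous function h having a unique global maximizer θ* with θ* ∈ supp(μ) and h(θ*) > 0. Then for every open neighborhood V of θ*, (∫_{V^c} m_N dμ)/(∫_V m_N dμ) → 0 as N → ∞, and hence (∫ f m_N dμ)/(∫ m_N dμ) → f(θ*) for every continuous f. -/
/-!
Uniform convergence of `N⁻¹ log m_N` to `h` gives `e^{N (h - ε)} ≤ m_N ≤ e^{N (h + ε)}` for
large `N`. By compactness `h ≤ M < h θ*` off an open `V ∋ θ*`, while `h > h θ* - ε` on a smaller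
open `W ∋ θ*`, which has positive mass since `θ* ∈ supp μ`. Hence the mass of `m_N dμ` off `V`
is at most `e^{N (M + ε)}`, that on `V` at least `μ W e^{N (h θ* - 2ε)}`, and their ratio decays
exponentially once `3ε < h θ* - M`. Concentration near `θ*` then gives the convergence of the
`m_N`-averages of a continuous `f`: split the average at the set where `f` is `ε/2`-close to
`f θ*`.
-/

open MeasureTheory Filter Topology

lemma tendsto_div_nhds_zero_of_exp_bounds {A B : ℕ → ℝ} {a b c₁ c₂ : ℝ} (hab : a < b)
    (hc₂ : 0 < c₂) (hA₀ : ∀ N, 0 ≤ A N)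
    (hA : ∀ᶠ N : ℕ in atTop, A N ≤ c₁ * Real.exp (N * a))
    (hB : ∀ᶠ N : ℕ in atTop, c₂ * Real.exp (N * b) ≤ B N) :
    Tendsto (fun N => A N / B N) atTop (𝓝 0) := by
  have hdecay : Tendsto (fun N : ℕ => c₁ / c₂ * Real.exp (N * (a - b))) atTop (𝓝 0) := by
    simpa using (Real.tendsto_exp_atBot.comp
      ((tendsto_natCast_atTop_atTop (R := ℝ)).atTop_mul_const_of_neg (sub_neg.2 hab))).const_mul
      (c₁ / c₂)
  have hB₀ : ∀ N : ℕ, 0 < c₂ * Real.exp (N * b) := fun N => mul_pos hc₂ (Real.exp_pos _)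
  refine squeeze_zero' ?_ ?_ hdecay
  · filter_upwards [hB] with N hBN using div_nonneg (hA₀ N) ((hB₀ N).le.trans hBN)
  · filter_upwards [hA, hB] with N hAN hBN
    calc A N / B N ≤ c₁ * Real.exp (N * a) / (c₂ * Real.exp (N * b)) :=
          div_le_div₀ ((hA₀ N).trans hAN) hAN (hB₀ N) hBN
      _ = c₁ / c₂ * Real.exp (N * (a - b)) := by
          rw [mul_sub, Real.exp_sub]; field_simp

lemma eventually_exp_le_and_le_exp_of_tendstoUniformly {X : Type*} {m : ℕ → X → ℝ}
    (hpos : ∀ N θ, 0 < m N θ) {h : X → ℝ}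
    (hunif : TendstoUniformly (fun (N : ℕ) θ => (N : ℝ)⁻¹ * Real.log (m N θ)) h atTop)
    {ε : ℝ} (hε : 0 < ε) :
    ∀ᶠ N : ℕ in atTop, ∀ θ,
      Real.exp (N * (h θ - ε)) ≤ m N θ ∧ m N θ ≤ Real.exp (N * (h θ + ε)) := by
  filter_upwards [Metric.tendstoUniformly_iff.1 hunif ε hε, eventually_gt_atTop 0]
    with N hN hN₀ θ
  have hN₀' : (0 : ℝ) < N := Nat.cast_pos.2 hN₀
  obtain ⟨hlo, hhi⟩ := abs_lt.1 (Real.dist_eq _ _ ▸ hN θ)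
  rw [← Real.le_log_iff_exp_le (hpos N θ), ← Real.log_le_iff_le_exp (hpos N θ),
    ← le_inv_mul_iff₀ hN₀', ← inv_mul_le_iff₀ hN₀']
  constructor <;> linarith

lemma IsCompact.exists_lt_forall_le {X : Type*} [TopologicalSpace X] {K : Set X}
    (hK : IsCompact K) {f : X → ℝ} (hf : ContinuousOn f K) {c : ℝ} (hlt : ∀ x ∈ K, f x < c) :
    ∃ M < c, ∀ x ∈ K, f x ≤ M := by
  rcases K.eq_empty_or_nonempty with rfl | hne
  · exact ⟨c - 1, by linarith, by simp⟩
  · obtain ⟨x₀, hx₀, hmax⟩ := hK.exists_isMaxOn hne hf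
    exact ⟨f x₀, hlt x₀ hx₀, hmax⟩

lemma setIntegral_pos_of_pos {X : Type*} [MeasurableSpace X] {μ : Measure X} {w : X → ℝ}
    {s : Set X} (hw : ∀ θ, 0 < w θ) (hwi : IntegrableOn w s μ) (hs : 0 < μ s) :
    0 < ∫ θ in s, w θ ∂μ := by
  rw [setIntegral_pos_iff_support_of_nonneg_ae (.of_forall fun θ => (hw θ).le) hwi,
    Function.support_eq_univ fun θ => (hw θ).ne', Set.univ_inter]
  exact hs

lemma abs_setIntegral_mul_le {X : Type*} [MeasurableSpace X] {μ : Measure X} {g w : X → ℝ}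
    {s : Set X} (hs : MeasurableSet s) (hw : IntegrableOn w s μ) (hw₀ : ∀ θ, 0 ≤ w θ)
    {δ : ℝ} (hg : ∀ θ ∈ s, |g θ| ≤ δ) :
    |∫ θ in s, g θ * w θ ∂μ| ≤ δ * ∫ θ in s, w θ ∂μ := by
  rw [← Real.norm_eq_abs, ← integral_const_mul δ]
  refine norm_integral_le_of_norm_le (hw.const_mul δ)
    (ae_restrict_of_forall_mem hs fun θ hθ => ?_)
  rw [Real.norm_eq_abs, abs_mul, abs_of_nonneg (hw₀ θ)]
  exact mul_le_mul_of_nonneg_right (hg θ hθ) (hw₀ θ)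

section Concentration

variable {X : Type*} [TopologicalSpace X] [CompactSpace X] [MeasurableSpace X]
  [OpensMeasurableSpace X] {μ : Measure X} [IsFiniteMeasure μ]
  {m : ℕ → X → ℝ} {x₀ : X}

lemma Continuous.integrable_of_compactSpace {f : X → ℝ} (hf : Continuous f) : Integrable f μ :=
  hf.integrable_of_hasCompactSupport (.of_compactSpace f)

lemma abs_integral_mul_sub_mul_integral_le {f w : X → ℝ} (hf : Continuous f)
    (hw : Continuous w) (hw₀ : ∀ θ, 0 ≤ w θ) {V : Set X} (hV : MeasurableSet V) {c δ C : ℝ}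
    (hδ : ∀ θ ∈ V, |f θ - c| ≤ δ) (hC : ∀ θ, |f θ - c| ≤ C) :
    |∫ θ, f θ * w θ ∂μ - c * ∫ θ, w θ ∂μ| ≤
      δ * ∫ θ in V, w θ ∂μ + C * ∫ θ in Vᶜ, w θ ∂μ := by
  have hwi : Integrable w μ := hw.integrable_of_compactSpace
  have hgw : Integrable (fun θ => (f θ - c) * w θ) μ :=
    ((hf.sub continuous_const).mul hw).integrable_of_compactSpace
  calc |∫ θ, f θ * w θ ∂μ - c * ∫ θ, w θ ∂μ|
      = |∫ θ in V, (f θ - c) * w θ ∂μ + ∫ θ in Vᶜ, (f θ - c) * w θ ∂μ| := by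
        rw [integral_add_compl hV hgw, ← integral_const_mul c,
          ← integral_sub (f := fun θ => f θ * w θ) (hf.mul hw).integrable_of_compactSpace
            (hwi.const_mul c)]
        simp only [sub_mul]
    _ ≤ δ * ∫ θ in V, w θ ∂μ + C * ∫ θ in Vᶜ, w θ ∂μ :=
        (abs_add_le _ _).trans (add_le_add
          (abs_setIntegral_mul_le hV hwi.integrableOn hw₀ hδ)
          (abs_setIntegral_mul_le hV.compl hwi.integrableOn hw₀ fun θ _ => hC θ))

theorem tendsto_setIntegral_compl_div_setIntegral (hpos : ∀ N θ, 0 < m N θ)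
    (hcontm : ∀ N, Continuous (m N)) {h : X → ℝ} (hconth : Continuous h)
    (hunif : TendstoUniformly (fun (N : ℕ) θ => (N : ℝ)⁻¹ * Real.log (m N θ)) h atTop)
    (hsupp : ∀ V : Set X, IsOpen V → x₀ ∈ V → 0 < μ V) (hmax : ∀ θ, θ ≠ x₀ → h θ < h x₀)
    {V : Set X} (hV : IsOpen V) (hx₀ : x₀ ∈ V) :
    Tendsto (fun N => (∫ θ in Vᶜ, m N θ ∂μ) / (∫ θ in V, m N θ ∂μ)) atTop (𝓝 0) := by
  obtain ⟨M, hM, hle⟩ := hV.isClosed_compl.isCompact.exists_lt_forall_le hconth.continuousOn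
    fun θ hθ => hmax θ (ne_of_mem_of_not_mem hx₀ hθ).symm
  obtain ⟨ε, hε, hgap⟩ : ∃ ε > 0, M + ε < h x₀ - 2 * ε :=
    ⟨(h x₀ - M) / 4, by linarith, by linarith⟩
  set W := V ∩ h ⁻¹' Set.Ioi (h x₀ - ε)
  have hW : IsOpen W := hV.inter (isOpen_Ioi.preimage hconth)
  have hμW : 0 < μ.real W :=
    ENNReal.toReal_pos (hsupp W hW ⟨hx₀, by simpa using hε⟩).ne' (measure_ne_top μ W)
  have hbounds := eventually_exp_le_and_le_exp_of_tendstoUniformly hpos hunif hε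
  refine tendsto_div_nhds_zero_of_exp_bounds (a := M + ε) (b := h x₀ - 2 * ε)
    (c₁ := μ.real Vᶜ) hgap hμW
    (fun N => setIntegral_nonneg hV.isClosed_compl.measurableSet fun θ _ => (hpos N θ).le) ?_ ?_
  · filter_upwards [hbounds] with N hN
    calc ∫ θ in Vᶜ, m N θ ∂μ ≤ ∫ θ in Vᶜ, Real.exp (N * (M + ε)) ∂μ :=
          setIntegral_mono_on (hcontm N).integrable_of_compactSpace.integrableOn
            (integrableOn_const (measure_ne_top μ _)) hV.isClosed_compl.measurableSet
            fun θ hθ => (hN θ).2.trans (Real.exp_le_exp.2 (by gcongr; exact hle θ hθ))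
      _ = μ.real Vᶜ * Real.exp (N * (M + ε)) := by rw [setIntegral_const, smul_eq_mul]
  · filter_upwards [hbounds] with N hN
    calc μ.real W * Real.exp (N * (h x₀ - 2 * ε)) ≤ ∫ θ in W, m N θ ∂μ := by
          rw [mul_comm]
          refine setIntegral_ge_of_const_le_real hW.measurableSet (measure_ne_top μ W)
            (fun θ hθ => (Real.exp_le_exp.2 ?_).trans (hN θ).1)
            (hcontm N).integrable_of_compactSpace.integrableOn
          have : h x₀ - ε < h θ := hθ.2
          exact mul_le_mul_of_nonneg_left (by linarith) N.cast_nonneg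
      _ ≤ ∫ θ in V, m N θ ∂μ :=
          setIntegral_mono_set (hcontm N).integrable_of_compactSpace.integrableOn
            (.of_forall fun θ => (hpos N θ).le) Set.inter_subset_left.eventuallyLE

theorem tendsto_integral_mul_div_integral_of_concentration (hpos : ∀ N θ, 0 < m N θ)
    (hcontm : ∀ N, Continuous (m N)) (hsupp : ∀ V : Set X, IsOpen V → x₀ ∈ V → 0 < μ V)
    (hconc : ∀ V : Set X, IsOpen V → x₀ ∈ V →
      Tendsto (fun N => (∫ θ in Vᶜ, m N θ ∂μ) / (∫ θ in V, m N θ ∂μ)) atTop (𝓝 0))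
    {f : X → ℝ} (hf : Continuous f) :
    Tendsto (fun N => (∫ θ, f θ * m N θ ∂μ) / (∫ θ, m N θ ∂μ)) atTop (𝓝 (f x₀)) := by
  rw [Metric.tendsto_nhds]
  intro ε hε
  obtain ⟨C, hC⟩ := isCompact_univ.exists_bound_of_continuousOn
    (hf.sub (continuous_const (y := f x₀))).continuousOn
  set V := {θ | |f θ - f x₀| < ε / 2}
  have hV : IsOpen V := isOpen_lt (hf.sub continuous_const).abs continuous_const
  have hx₀ : x₀ ∈ V := by simpa [V] using hε
  filter_upwards [((hconc V hV hx₀).const_mul C).eventually (gt_mem_nhds (a := ε / 2)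
    (by linarith))] with N hN
  have hmi := (hcontm N).integrable_of_compactSpace (μ := μ)
  have hIV : 0 < ∫ θ in V, m N θ ∂μ := setIntegral_pos_of_pos (hpos N) hmi.integrableOn
    (hsupp V hV hx₀)
  have hA : 0 ≤ ∫ θ in Vᶜ, m N θ ∂μ :=
    setIntegral_nonneg hV.isClosed_compl.measurableSet fun θ _ => (hpos N θ).le
  have hsplit := integral_add_compl hV.measurableSet hmi
  have hbound := abs_integral_mul_sub_mul_integral_le (μ := μ) hf (hcontm N)
    (fun θ => (hpos N θ).le) hV.measurableSet (fun θ hθ => le_of_lt hθ)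
    (fun θ => by simpa using hC θ (Set.mem_univ θ))
  rw [mul_div_assoc', div_lt_iff₀ hIV] at hN
  have hI : 0 < ∫ θ, m N θ ∂μ := hsplit ▸ add_pos_of_pos_of_nonneg hIV hA
  rw [Real.dist_eq, div_sub' hI.ne', abs_div, abs_of_pos hI, div_lt_iff₀ hI,
    mul_comm _ (f x₀)]
  refine hbound.trans_lt ?_
  rw [← hsplit]
  nlinarith [mul_nonneg hε.le hA]

end Concentration

theorem stmt14_general
    {Ξ : Type*} [MetricSpace Ξ] [CompactSpace Ξ] [MeasurableSpace Ξ] [BorelSpace Ξ]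
    (μ : Measure Ξ) [IsProbabilityMeasure μ]
    (m : ℕ → Ξ → ℝ) (hpos : ∀ N θ, 0 < m N θ) (hcontm : ∀ N, Continuous (m N))
    (h : Ξ → ℝ) (hconth : Continuous h)
    (hunif : TendstoUniformly (fun (N : ℕ) θ => (N : ℝ)⁻¹ * Real.log (m N θ)) h atTop)
    (θstar : Ξ)
    (hsupp : ∀ V : Set Ξ, IsOpen V → θstar ∈ V → 0 < μ V)
    (hmax : ∀ θ, θ ≠ θstar → h θ < h θstar) :
    (∀ V : Set Ξ, IsOpen V → θstar ∈ V →
      Tendsto (fun N => (∫ θ in Vᶜ, m N θ ∂μ) / (∫ θ in V, m N θ ∂μ)) atTop (𝓝 0)) ∧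
    (∀ f : Ξ → ℝ, Continuous f →
      Tendsto (fun N => (∫ θ, f θ * m N θ ∂μ) / (∫ θ, m N θ ∂μ)) atTop
        (𝓝 (f θstar))) := by
  have hconc : ∀ V : Set Ξ, IsOpen V → θstar ∈ V →
      Tendsto (fun N => (∫ θ in Vᶜ, m N θ ∂μ) / (∫ θ in V, m N θ ∂μ)) atTop (𝓝 0) :=
    fun _ hV hθ =>
      tendsto_setIntegral_compl_div_setIntegral hpos hcontm hconth hunif hsupp hmax hV hθ
  exact ⟨hconc, fun f hf =>
    tendsto_integral_mul_div_integral_of_concentration hpos hcontm hsupp hconc hf⟩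

/-- Unique emerging dominance: if `h_N = N⁻¹ log m_N` converges uniformly to a
continuous `h` with unique maximizer `θ* ∈ supp μ` and `h θ* > 0`, then the mass of
`m_N dμ` concentrates around `θ*`, and the renormalized measures converge weakly
to `δ_{θ*}`. -/
theorem stmt14
    {Ξ : Type*} [MetricSpace Ξ] [CompactSpace Ξ] [MeasurableSpace Ξ] [BorelSpace Ξ]
    (μ : Measure Ξ) [IsProbabilityMeasure μ]
    (m : ℕ → Ξ → ℝ) (hpos : ∀ N θ, 0 < m N θ) (hcontm : ∀ N, Continuous (m N))
    (h : Ξ → ℝ) (hconth : Continuous h)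
    (hunif : TendstoUniformly (fun (N : ℕ) θ => (N : ℝ)⁻¹ * Real.log (m N θ)) h atTop)
    (θstar : Ξ)
    (hsupp : ∀ V : Set Ξ, IsOpen V → θstar ∈ V → 0 < μ V)
    (hmax : ∀ θ, θ ≠ θstar → h θ < h θstar)
    (hposmax : 0 < h θstar) :
    (∀ V : Set Ξ, IsOpen V → θstar ∈ V →
      Tendsto (fun N => (∫ θ in Vᶜ, m N θ ∂μ) / (∫ θ in V, m N θ ∂μ)) atTop (𝓝 0)) ∧
    (∀ f : Ξ → ℝ, Continuous f →
      Tendsto (fun N => (∫ θ, f θ * m N θ ∂μ) / (∫ θ, m N θ ∂μ)) atTop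
        (𝓝 (f θstar))) :=
  stmt14_general μ m hpos hcontm h hconth hunif θstar hsupp hmax
end

section
/- Let X be the Markov chain on ℤ started at 0 which from any state i ≥ 1 steps +1 with probability θ and −1 with probability 1−θ, from i ≤ −1 steps −1 with probability θ and +1 with probability 1−θ, and from 0 steps ±1 with equal total dynamics as above (single-well walk), with 1/2 < θ ≤ 1. Let τ_N be the first hitting time of {−N, N}. Then τ_N / E[τ_N] → 1 almost surely as N → ∞. -/
/-!
`|X n|` is the walk reflected at `0` driven by the i.i.d. steps `ε n = ±1` of mean
`c = 2θ - 1 > 0`. By the strong law `ε 0 + ⋯ + ε (n - 1) ∼ c n`; after its last visit to `0`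
the reflected walk differs from this free walk by a constant, so `|X n| ∼ c n` and, since it
climbs by unit steps, `τ N ∼ N / c` almost surely. The free walk stays below the reflected one,
so Wald's identity for it, stopped at `min (τ N) n`, gives `c E[τ N] ≤ N`; together with the
almost sure asymptotics (via dominated convergence for `min (τ N / N) c⁻¹`) this forces
`E[τ N] ∼ N / c`.
-/

open MeasureTheory ProbabilityTheory Filter Topology Finset
open scoped ENNReal

-- `firstHit f N = 0` (`sInf ∅`) when `f` never takes the value `N`.
noncomputable def firstHit (f : ℕ → ℤ) (N : ℕ) : ℕ := sInf {n | f n = N}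

section SkipFree

variable {f : ℕ → ℤ} {N : ℕ}

lemma firstHit_spec (h : ∃ n, f n = N) : f (firstHit f N) = N :=
  Nat.sInf_mem h

lemma ne_of_lt_firstHit {j : ℕ} (hj : j < firstHit f N) : f j ≠ N :=
  Nat.notMem_of_lt_sInf hj

lemma lt_firstHit_iff (h : ∃ n, f n = N) {k : ℕ} :
    k < firstHit f N ↔ ∀ j ≤ k, f j ≠ N :=
  ⟨fun hk _ hj => ne_of_lt_firstHit (hj.trans_lt hk),
    fun hk => not_le.1 fun hle => hk _ hle (firstHit_spec h)⟩

lemma le_of_forall_lt_ne (hf : ∀ n, f (n + 1) ≤ f n + 1) {M : ℤ} (h0 : f 0 ≤ M) {m : ℕ}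
    (hm : ∀ j < m, f j ≠ M) : f m ≤ M := by
  induction m with
  | zero => exact h0
  | succ m ih =>
    have := ih fun j hj => hm j (hj.trans m.lt_succ_self)
    have := hm m m.lt_succ_self
    have := hf m
    omega

lemma exists_le_eq_of_le (hf : ∀ n, f (n + 1) ≤ f n + 1) {M : ℤ} (h0 : f 0 ≤ M) {k : ℕ}
    (hk : M ≤ f k) : ∃ j ≤ k, f j = M := by
  by_contra! h
  exact h k le_rfl (le_antisymm (le_of_forall_lt_ne hf h0 fun j hj => h j hj.le) hk)

lemma le_of_le_firstHit (hf : ∀ n, f (n + 1) ≤ f n + 1) (h0 : f 0 = 0) {k : ℕ}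
    (hk : k ≤ firstHit f N) : f k ≤ N :=
  le_of_forall_lt_ne hf (by simp [h0]) fun _ hj => ne_of_lt_firstHit (hj.trans_le hk)

lemma le_self_of_succ_le (hf : ∀ n, f (n + 1) ≤ f n + 1) (h0 : f 0 = 0) (n : ℕ) : f n ≤ n := by
  induction n with
  | zero => simp [h0]
  | succ n ih => push_cast; linarith [hf n]

lemma tendsto_atTop_of_tendsto_div {g : ℕ → ℝ} {c : ℝ} (hc : 0 < c)
    (hg : Tendsto (fun n => g n / n) atTop (𝓝 c)) : Tendsto g atTop atTop :=
  (hg.pos_mul_atTop hc tendsto_natCast_atTop_atTop).congr' <| by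
    filter_upwards [eventually_ne_atTop 0] with n hn
    field_simp

lemma exists_eq_of_tendsto_atTop (hf : ∀ n, f (n + 1) ≤ f n + 1) (h0 : f 0 = 0)
    (htop : Tendsto (fun n => (f n : ℝ)) atTop atTop) (N : ℕ) : ∃ n, f n = N := by
  obtain ⟨k, hk⟩ := (htop.eventually_ge_atTop (N : ℝ)).exists
  obtain ⟨j, -, hj⟩ := exists_le_eq_of_le hf (by simp [h0]) (M := N) (by exact_mod_cast hk)
  exact ⟨j, hj⟩

lemma tendsto_firstHit_div (hf : ∀ n, f (n + 1) ≤ f n + 1) (h0 : f 0 = 0) {c : ℝ}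
    (hc : 0 < c) (hlim : Tendsto (fun n => (f n : ℝ) / n) atTop (𝓝 c)) :
    Tendsto (fun N => (firstHit f N : ℝ) / N) atTop (𝓝 c⁻¹) := by
  have hhit := exists_eq_of_tendsto_atTop hf h0 (tendsto_atTop_of_tendsto_div hc hlim)
  have hge (N : ℕ) : N ≤ firstHit f N := by
    exact_mod_cast (firstHit_spec (hhit N)).symm.trans_le (le_self_of_succ_le hf h0 _)
  refine ((hlim.comp (tendsto_atTop_mono hge tendsto_id)).inv₀ hc.ne').congr fun N => ?_
  simp [firstHit_spec (hhit N)]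

end SkipFree

def reflectedWalk (e : ℕ → ℤ) : ℕ → ℤ
  | 0 => 0
  | n + 1 => if reflectedWalk e n = 0 then 1 else reflectedWalk e n + e n

namespace reflectedWalk

variable {e : ℕ → ℤ}

@[simp] lemma zero : reflectedWalk e 0 = 0 := rfl

lemma succ (n : ℕ) : reflectedWalk e (n + 1) =
    if reflectedWalk e n = 0 then 1 else reflectedWalk e n + e n := rfl

lemma succ_le (he : ∀ n, e n ≤ 1) (n : ℕ) :
    reflectedWalk e (n + 1) ≤ reflectedWalk e n + 1 := by
  rw [succ]; split_ifs <;> linarith [he n]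

lemma add_le_succ (he : ∀ n, e n ≤ 1) (n : ℕ) :
    reflectedWalk e n + e n ≤ reflectedWalk e (n + 1) := by
  rw [succ]; split_ifs <;> linarith [he n]

lemma sum_le (he : ∀ n, e n ≤ 1) (n : ℕ) : ∑ k ∈ range n, e k ≤ reflectedWalk e n := by
  induction n with
  | zero => simp
  | succ n ih => rw [sum_range_succ]; linarith [add_le_succ he n]

lemma sub_eq_sum_Ico {m n : ℕ} (hmn : m ≤ n) (hz : ∀ k ∈ Ico m n, reflectedWalk e k ≠ 0) :
    reflectedWalk e n - reflectedWalk e m = ∑ k ∈ Ico m n, e k := by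
  induction n, hmn using Nat.le_induction with
  | base => simp
  | succ n hmn ih =>
    rw [sum_Ico_succ_top hmn, succ, if_neg (hz n (mem_Ico.2 ⟨hmn, n.lt_succ_self⟩)),
      ← ih fun k hk => hz k (Ico_subset_Ico_right n.le_succ hk)]
    ring

lemma tendsto_div (he : ∀ n, e n ≤ 1) {c : ℝ} (hc : 0 < c)
    (hlim : Tendsto (fun n => ((∑ k ∈ range n, e k : ℤ) : ℝ) / n) atTop (𝓝 c)) :
    Tendsto (fun n => (reflectedWalk e n : ℝ) / n) atTop (𝓝 c) := by
  have htop : Tendsto (fun n => (reflectedWalk e n : ℝ)) atTop atTop :=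
    tendsto_atTop_mono (fun n => by exact_mod_cast sum_le he n)
      (tendsto_atTop_of_tendsto_div hc hlim)
  -- once the walk stays away from `0` it moves exactly like the free walk
  obtain ⟨m, hm⟩ := (htop.eventually_ge_atTop 1).exists_forall_of_atTop
  have hshift : Tendsto (fun n => ((∑ k ∈ range n, e k : ℤ) : ℝ) / n
      + (reflectedWalk e m - ∑ k ∈ range m, e k : ℤ) / n) atTop (𝓝 c) := by
    simpa using hlim.add (tendsto_const_div_atTop_nhds_zero_nat _)
  refine hshift.congr' ?_
  filter_upwards [eventually_ge_atTop m] with n hn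
  have hz : ∀ k ∈ Ico m n, reflectedWalk e k ≠ 0 := fun k hk h => by
    have := hm k (mem_Ico.1 hk).1
    norm_num [h] at this
  have := sub_eq_sum_Ico hn hz
  rw [← sum_range_add_sum_Ico _ hn, ← add_div, ← Int.cast_add]
  congr 2
  linarith

lemma sum_ite_lt_firstHit_le (he : ∀ n, e n ≤ 1) (N n : ℕ) :
    ∑ k ∈ range n, (if k < firstHit (reflectedWalk e) N then e k else 0) ≤ N := by
  have hfilter : (range n).filter (· < firstHit (reflectedWalk e) N)
      = range (min n (firstHit (reflectedWalk e) N)) := by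
    ext; simp only [mem_filter, mem_range]; omega
  rw [← sum_filter, hfilter]
  exact (sum_le he _).trans (le_of_le_firstHit (succ_le he) rfl (min_le_right _ _))

end reflectedWalk

section Integration

variable {Ω : Type*} {m : MeasurableSpace Ω} {μ : Measure Ω}

lemma measurable_reflectedWalk {ε : ℕ → Ω → ℤ} {n : ℕ} (hε : ∀ i < n, Measurable (ε i)) :
    Measurable fun ω => reflectedWalk (ε · ω) n := by
  induction n with
  | zero => exact measurable_const
  | succ n ih =>
    have hn := ih fun i hi => hε i (hi.trans n.lt_succ_self)
    exact Measurable.ite (hn (measurableSet_singleton 0)) measurable_const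
      (hn.add (hε n n.lt_succ_self))

lemma measurable_sInf_setOf {p : ℕ → Ω → Prop} (hp : ∀ n, MeasurableSet {ω | p n ω}) :
    Measurable fun ω => sInf {n | p n ω} := by
  refine measurable_to_countable' fun k => ?_
  have : (fun ω => sInf {n | p n ω}) ⁻¹' {k}
      = {ω | p k ω ∧ ∀ j < k, ¬ p j ω} ∪ {ω | k = 0 ∧ ∀ n, ¬ p n ω} := by
    ext ω
    by_cases hex : ∃ n, p n ω
    · have : ¬ ∀ n, ¬ p n ω := not_forall_not.2 hex
      simp only [Set.mem_preimage, Set.mem_singleton_iff, Set.mem_union, Set.mem_ofPred_eq,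
        this, and_false, or_false]
      constructor
      · rintro rfl
        exact ⟨Nat.sInf_mem hex, fun j hj => Nat.notMem_of_lt_sInf hj⟩
      · rintro ⟨hk, hlt⟩
        exact le_antisymm (Nat.sInf_le hk) (not_lt.1 fun h => hlt _ h (Nat.sInf_mem hex))
    · simp only [not_exists] at hex
      simp [hex, eq_comm]
  rw [this]
  simp only [Set.ofPred_and, Set.ofPred_forall]
  measurability

lemma natCast_eq_tsum_ite_lt (t : ℕ) :
    (t : ℝ≥0∞) = ∑' k, if k < t then 1 else 0 := by
  rw [tsum_eq_sum (s := range t) fun k hk => by simpa using hk,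
    sum_congr rfl fun k hk => if_pos (mem_range.1 hk)]
  simp

lemma lintegral_natCast_eq_tsum {τ : Ω → ℕ} (hτ : Measurable τ) :
    ∫⁻ ω, (τ ω : ℝ≥0∞) ∂μ = ∑' k, μ {ω | k < τ ω} := by
  have hset (k : ℕ) : MeasurableSet {ω | k < τ ω} := hτ (measurableSet_Ioi (a := k))
  calc ∫⁻ ω, (τ ω : ℝ≥0∞) ∂μ = ∫⁻ ω, ∑' k, {ω | k < τ ω}.indicator 1 ω ∂μ := by
        congr with ω
        simp only [natCast_eq_tsum_ite_lt, Set.indicator_apply, Set.mem_ofPred_eq,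
          Pi.one_apply]
    _ = ∑' k, μ {ω | k < τ ω} := by
      rw [lintegral_tsum fun k => (measurable_one.indicator (hset k)).aemeasurable]
      simp_rw [lintegral_indicator_one (hset _)]

lemma integral_natCast_le_of_sum_le [IsFiniteMeasure μ] {τ : Ω → ℕ} (hτ : Measurable τ)
    {C : ℝ} (hC : ∀ n, ∑ k ∈ range n, μ.real {ω | k < τ ω} ≤ C) :
    Integrable (fun ω => (τ ω : ℝ)) μ ∧ ∫ ω, (τ ω : ℝ) ∂μ ≤ C := by
  have hlin : ∫⁻ ω, (τ ω : ℝ≥0∞) ∂μ ≤ ENNReal.ofReal C := by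
    rw [lintegral_natCast_eq_tsum hτ]
    refine ENNReal.tsum_le_of_sum_range_le fun n => ?_
    rw [← ENNReal.ofReal_toReal (ENNReal.sum_ne_top.2 fun _ _ => measure_ne_top _ _),
      ENNReal.toReal_sum fun _ _ => measure_ne_top _ _]
    exact ENNReal.ofReal_le_ofReal (hC n)
  have hfin : ∫⁻ ω, (τ ω : ℝ≥0∞) ∂μ ≠ ⊤ := ne_top_of_le_ne_top ENNReal.ofReal_ne_top hlin
  have hmeas : AEMeasurable (fun ω => (τ ω : ℝ≥0∞)) μ :=
    (measurable_from_top.comp hτ).aemeasurable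
  refine ⟨by simpa using integrable_toReal_of_lintegral_ne_top hmeas hfin, ?_⟩
  have := integral_toReal hmeas (.of_forall fun _ => ENNReal.natCast_lt_top _)
  simp only [ENNReal.toReal_natCast] at this
  rw [this]
  exact ENNReal.toReal_le_of_le_ofReal (by simpa using hC 0) hlin

lemma tendsto_integral_of_ae_tendsto_of_integral_le [IsProbabilityMeasure μ] {f : ℕ → Ω → ℝ} {a : ℝ}
    (hf0 : ∀ n ω, 0 ≤ f n ω) (hint : ∀ n, Integrable (f n) μ)
    (hlim : ∀ᵐ ω ∂μ, Tendsto (f · ω) atTop (𝓝 a)) (hle : ∀ᶠ n in atTop, ∫ ω, f n ω ∂μ ≤ a) :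
    Tendsto (fun n => ∫ ω, f n ω ∂μ) atTop (𝓝 a) := by
  -- truncating at the limit gives a dominated sequence with the same limit
  have htrunc : Tendsto (fun n => ∫ ω, min (f n ω) a ∂μ) atTop (𝓝 a) := by
    have := tendsto_integral_of_dominated_convergence (fun _ => |a|)
      (fun n => ((hint n).aemeasurable.min aemeasurable_const).aestronglyMeasurable)
      (integrable_const |a|)
      (fun n => .of_forall fun ω => abs_le.2
        ⟨le_min ((neg_nonpos.2 (abs_nonneg a)).trans (hf0 n ω)) (neg_abs_le a),
          (min_le_right _ _).trans (le_abs_self a)⟩)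
      (hlim.mono fun ω hω => by simpa using hω.min tendsto_const_nhds)
    simpa using this
  refine tendsto_of_tendsto_of_tendsto_of_le_of_le' htrunc tendsto_const_nhds ?_ hle
  exact .of_forall fun n => integral_mono ((hint n).inf (integrable_const a)) (hint n)
    fun ω => min_le_left _ _

end Integration

section RandomReflectedWalk

variable {Ω : Type*} {mΩ : MeasurableSpace Ω} {μ : Measure Ω} {ε : ℕ → Ω → ℤ}

lemma ae_tendsto_firstHit_reflectedWalk_div (hindep : iIndepFun ε μ)
    (hident : ∀ n, IdentDistrib (ε n) (ε 0) μ μ) (hle : ∀ n ω, ε n ω ≤ 1)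
    (hpos : 0 < ∫ ω, (ε 0 ω : ℝ) ∂μ) :
    ∀ᵐ ω ∂μ, (∀ N : ℕ, ∃ n, reflectedWalk (ε · ω) n = N) ∧
      Tendsto (fun N => (firstHit (reflectedWalk (ε · ω)) N : ℝ) / N) atTop
        (𝓝 (∫ ω, (ε 0 ω : ℝ) ∂μ)⁻¹) := by
  have hslln := strong_law_ae (fun n ω => (ε n ω : ℝ)) (Integrable.of_integral_ne_zero hpos.ne')
    (fun i j hij => (hindep.indepFun hij).comp measurable_from_top measurable_from_top)
    (fun n => (hident n).comp measurable_from_top)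
  filter_upwards [hslln] with ω hω
  have hsum : Tendsto (fun n => ((∑ k ∈ range n, ε k ω : ℤ) : ℝ) / n) atTop
      (𝓝 (∫ ω, (ε 0 ω : ℝ) ∂μ)) := by
    simpa [div_eq_inv_mul] using hω
  have hwalk := reflectedWalk.tendsto_div (hle · ω) hpos hsum
  exact ⟨exists_eq_of_tendsto_atTop (reflectedWalk.succ_le (hle · ω)) rfl
      (tendsto_atTop_of_tendsto_div hpos hwalk),
    tendsto_firstHit_div (reflectedWalk.succ_le (hle · ω)) rfl hpos hwalk⟩

lemma setIntegral_lt_firstHit_reflectedWalk (hmeas : ∀ n, Measurable (ε n))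
    (hindep : iIndepFun ε μ) {N : ℕ} (hhit : ∀ᵐ ω ∂μ, ∃ n, reflectedWalk (ε · ω) n = N)
    (k : ℕ) :
    ∫ ω in {ω | k < firstHit (reflectedWalk (ε · ω)) N}, (ε k ω : ℝ) ∂μ
      = μ.real {ω | k < firstHit (reflectedWalk (ε · ω)) N} * ∫ ω, (ε k ω : ℝ) ∂μ := by
  let past : MeasurableSpace Ω := ⨆ i ∈ Set.Iio k, MeasurableSpace.comap (ε i) inferInstance
  have hcomap (i : ℕ) : MeasurableSpace.comap (ε i) inferInstance ≤ mΩ := (hmeas i).comap_le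
  -- not having hit `N` by time `k` is decided by `ε 0, …, ε (k - 1)`
  let B := {ω | ∀ j ≤ k, reflectedWalk (ε · ω) j ≠ N}
  have hB : MeasurableSet[past] B := by
    have hwalk (j : ℕ) (hj : j ≤ k) : Measurable[past] fun ω => reflectedWalk (ε · ω) j :=
      measurable_reflectedWalk fun i hi => measurable_iff_comap_le.2 <|
        le_iSup₂ (f := fun i (_ : i ∈ Set.Iio k) => MeasurableSpace.comap (ε i) inferInstance) i
          (hi.trans_le hj)
    simp only [B, Set.ofPred_forall]
    exact .iInter fun j => .iInter fun hj => (hwalk j hj (measurableSet_singleton _)).compl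
  have hindep' : Indep past (MeasurableSpace.comap (ε k) inferInstance) μ := by
    have := indep_iSup_of_disjoint hcomap hindep (S := Set.Iio k) (T := {k}) (by simp)
    simpa [past] using this
  have hBae : {ω | k < firstHit (reflectedWalk (ε · ω)) N} =ᵐ[μ] B :=
    hhit.mono fun ω hω => propext (lt_firstHit_iff hω)
  rw [setIntegral_congr_set hBae, measureReal_congr hBae]
  exact hindep'.setIntegral_eq_mul (iSup₂_le fun i _ => hcomap i) (hmeas k).aemeasurable hB
    measurable_from_top.aestronglyMeasurable

lemma measurable_firstHit_reflectedWalk (hmeas : ∀ n, Measurable (ε n)) (N : ℕ) :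
    Measurable fun ω => firstHit (reflectedWalk (ε · ω)) N :=
  measurable_sInf_setOf fun _ =>
    measurable_reflectedWalk (fun i _ => hmeas i) (measurableSet_singleton _)

lemma integral_firstHit_reflectedWalk_le [IsProbabilityMeasure μ]
    (hmeas : ∀ n, Measurable (ε n)) (hindep : iIndepFun ε μ)
    (hident : ∀ n, IdentDistrib (ε n) (ε 0) μ μ) (hle : ∀ n ω, ε n ω ≤ 1)
    (hpos : 0 < ∫ ω, (ε 0 ω : ℝ) ∂μ) {N : ℕ}
    (hhit : ∀ᵐ ω ∂μ, ∃ n, reflectedWalk (ε · ω) n = N) :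
    Integrable (fun ω => (firstHit (reflectedWalk (ε · ω)) N : ℝ)) μ ∧
      ∫ ω, (firstHit (reflectedWalk (ε · ω)) N : ℝ) ∂μ ≤ N / ∫ ω, (ε 0 ω : ℝ) ∂μ := by
  set c := ∫ ω, (ε 0 ω : ℝ) ∂μ
  set τ := fun ω => firstHit (reflectedWalk (ε · ω)) N
  have hident' (k : ℕ) := (hident k).comp (measurable_from_top (β := ℝ) (f := Int.cast))
  have hint (k : ℕ) : Integrable (fun ω => (ε k ω : ℝ)) μ :=
    (hident' k).integrable_iff.2 (Integrable.of_integral_ne_zero hpos.ne')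
  have hmean (k : ℕ) : ∫ ω, (ε k ω : ℝ) ∂μ = c := (hident' k).integral_eq
  have hτ : Measurable τ := measurable_firstHit_reflectedWalk hmeas N
  have hlt (k : ℕ) : MeasurableSet {ω | k < τ ω} := measurableSet_lt measurable_const hτ
  refine integral_natCast_le_of_sum_le hτ fun n => (le_div_iff₀ hpos).2 ?_
  -- Wald's identity for the free walk stopped at `min τ n`, and `∑_{k < min τ n} ε k ≤ N`
  calc (∑ k ∈ range n, μ.real {ω | k < τ ω}) * c
      = ∫ ω, ∑ k ∈ range n, {ω | k < τ ω}.indicator (fun ω => (ε k ω : ℝ)) ω ∂μ := by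
        rw [integral_finsetSum _ fun k _ => (hint k).indicator (hlt k), sum_mul]
        refine sum_congr rfl fun k _ => ?_
        rw [integral_indicator (hlt k),
          setIntegral_lt_firstHit_reflectedWalk hmeas hindep hhit k, hmean]
    _ ≤ ∫ _, (N : ℝ) ∂μ := by
        refine integral_mono (integrable_finsetSum _ fun k _ =>
          (hint k).indicator (hlt k)) (integrable_const _) fun ω => ?_
        have := reflectedWalk.sum_ite_lt_firstHit_le (hle · ω) N n
        simp only [Set.indicator_apply, Set.mem_ofPred_eq]
        exact_mod_cast this
    _ = N := by simp

theorem ae_tendsto_firstHit_reflectedWalk_div_integral [IsProbabilityMeasure μ]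
    (hmeas : ∀ n, Measurable (ε n)) (hindep : iIndepFun ε μ)
    (hident : ∀ n, IdentDistrib (ε n) (ε 0) μ μ) (hle : ∀ n ω, ε n ω ≤ 1)
    (hpos : 0 < ∫ ω, (ε 0 ω : ℝ) ∂μ) :
    ∀ᵐ ω ∂μ, Tendsto (fun N : ℕ => (firstHit (reflectedWalk (ε · ω)) N : ℝ)
      / ∫ ω', (firstHit (reflectedWalk (ε · ω')) N : ℝ) ∂μ) atTop (𝓝 1) := by
  have hae := ae_tendsto_firstHit_reflectedWalk_div hindep hident hle hpos
  have hwald (N : ℕ) := integral_firstHit_reflectedWalk_le hmeas hindep hident hle hpos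
    (hae.mono fun ω hω => hω.1 N)
  set c := ∫ ω, (ε 0 ω : ℝ) ∂μ
  have hmean : Tendsto (fun N : ℕ => (∫ ω, (firstHit (reflectedWalk (ε · ω)) N : ℝ) ∂μ) / N)
      atTop (𝓝 c⁻¹) := by
    have := tendsto_integral_of_ae_tendsto_of_integral_le
      (f := fun (N : ℕ) ω => (firstHit (reflectedWalk (ε · ω)) N : ℝ) / N)
      (fun _ _ => by positivity) (fun N => (hwald N).1.div_const _) (hae.mono fun ω hω => hω.2)
      (by
        filter_upwards [eventually_ne_atTop 0] with N hN
        rw [integral_div, div_le_iff₀ (by positivity), inv_mul_eq_div]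
        exact (hwald N).2)
    simpa only [integral_div] using this
  filter_upwards [hae] with ω hω
  have := hω.2.div hmean (inv_ne_zero hpos.ne')
  rw [div_self (inv_ne_zero hpos.ne')] at this
  refine this.congr' ?_
  filter_upwards [eventually_ne_atTop 0] with N hN
  exact div_div_div_cancel_right₀ (by exact_mod_cast hN) _ _

end RandomReflectedWalk

lemma integral_sign_lt_of_uniform {Ω : Type*} [MeasureSpace Ω] {V : Ω → ℝ} (hV : Measurable V)
    (hunif : Measure.map V ℙ = volume.restrict (Set.Ioo (0 : ℝ) 1)) {θ : ℝ} (hθ0 : 0 ≤ θ)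
    (hθ1 : θ ≤ 1) :
    ∫ ω, (if V ω < θ then 1 else -1 : ℝ) = 2 * θ - 1 := by
  have hsign : (fun x : ℝ => if x < θ then (1 : ℝ) else -1)
      = fun x => 2 * (Set.Iio θ).indicator 1 x - 1 := by
    ext x; by_cases h : x < θ <;> norm_num [h]
  have hmeas : Measurable fun x : ℝ => if x < θ then (1 : ℝ) else -1 :=
    Measurable.ite measurableSet_Iio measurable_const measurable_const
  rw [← integral_map (f := fun x : ℝ => if x < θ then (1 : ℝ) else -1) hV.aemeasurable
    hmeas.aestronglyMeasurable, hunif, hsign, integral_sub, integral_const_mul,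
    integral_indicator_one measurableSet_Iio]
  · simp [Measure.real, Measure.restrict_apply measurableSet_Iio, Set.Iio_inter_Ioo, hθ1, hθ0]
  · exact ((integrable_const 1).indicator measurableSet_Iio).const_mul 2
  · exact integrable_const 1

lemma abs_eq_reflectedWalk {x e : ℕ → ℤ} (he : ∀ n, e n = 1 ∨ e n = -1) (h0 : x 0 = 0)
    (hstep : ∀ n, x (n + 1) = x n + if 1 ≤ x n then e n else -e n) (n : ℕ) :
    |x n| = reflectedWalk e n := by
  induction n with
  | zero => simp [h0]
  | succ n ih =>
    rw [hstep, reflectedWalk.succ, ← ih]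
    simp only [Int.abs_eq_natAbs]
    rcases he n with h | h <;> split_ifs <;> omega

/-- Cut-off for the supercritical single-well walk (`1/2 < θ ≤ 1`), driven by
i.i.d. uniform innovations: `τ_N / E[τ_N] → 1` almost surely. -/
theorem stmt15
    {Ω : Type*} [MeasureSpace Ω] [IsProbabilityMeasure (ℙ : Measure Ω)]
    (θ : ℝ) (hθ : 1 / 2 < θ) (hθ1 : θ ≤ 1)
    (U : ℕ → Ω → ℝ) (hUmeas : ∀ n, Measurable (U n))
    (hUindep : iIndepFun U ℙ)
    (hUunif : ∀ n, Measure.map (U n) ℙ = volume.restrict (Set.Ioo (0 : ℝ) 1))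
    (X : ℕ → Ω → ℤ) (hX0 : ∀ ω, X 0 ω = 0)
    (hXstep : ∀ n ω, X (n + 1) ω = X n ω +
      (if 1 ≤ X n ω then (if U n ω < θ then 1 else -1)
        else (if U n ω < θ then -1 else 1)))
    (τ : ℕ → Ω → ℕ)
    (hτ : ∀ N ω, τ N ω = sInf {n | X n ω = (N : ℤ) ∨ X n ω = -(N : ℤ)}) :
    ∀ᵐ ω ∂(ℙ : Measure Ω),
      Tendsto (fun N : ℕ => (τ N ω : ℝ) / ∫ ω', (τ N ω' : ℝ)) atTop (𝓝 1) := by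
  let sign : ℝ → ℤ := fun x => if x < θ then 1 else -1
  have hsign : Measurable sign := Measurable.ite measurableSet_Iio measurable_const measurable_const
  let ε : ℕ → Ω → ℤ := fun n => sign ∘ U n
  have hpm (n : ℕ) (ω : Ω) : ε n ω = 1 ∨ ε n ω = -1 := by
    simp only [ε, sign, Function.comp]; split_ifs <;> simp
  have hτ' : τ = fun N ω => firstHit (reflectedWalk (ε · ω)) N := by
    ext N ω
    have habs := abs_eq_reflectedWalk (x := (X · ω)) (hpm · ω) (hX0 ω)
      (fun n => by rw [hXstep]; simp only [ε, sign, Function.comp]; split_ifs <;> simp)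
    simp only [hτ, firstHit, ← habs, abs_eq (Int.natCast_nonneg N)]
  have hident (n : ℕ) : IdentDistrib (ε n) (ε 0) ℙ ℙ :=
    IdentDistrib.comp ⟨(hUmeas n).aemeasurable, (hUmeas 0).aemeasurable, by rw [hUunif, hUunif]⟩
      hsign
  have hmean : ∫ ω, (ε 0 ω : ℝ) = 2 * θ - 1 := by
    simpa [ε, sign, apply_ite] using
      integral_sign_lt_of_uniform (hUmeas 0) (hUunif 0) (by linarith) hθ1
  subst hτ'
  exact ae_tendsto_firstHit_reflectedWalk_div_integral (fun n => hsign.comp (hUmeas n))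
    (hUindep.comp _ fun _ => hsign) hident (fun n ω => by rcases hpm n ω with h | h <;> simp [h])
    (by rw [hmean]; linarith)
end
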